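/- arXiv:1509.00059 — 3 statements merged into one kernel-verified Lean document; each statement's English description precedes it below -/
import Mathlib

section
/- Consider the two-phase ODE: E' = F₋(τ) for τ ∈ [t_b, t_c] and E' = ζF₋(τ)/(ζ − E) for τ ∈ [t_c, t_b+1], with ζ > 0 and E < 0 throughout. Then any solution satisfies the implicit Poincaré map E(t_b+1) − E(t_b+1)²/(2ζ) = E_b − E_c²/(2ζ) + ∫₀¹ F₋(τ)dτ, where E_b = E(t_b) and E_c = E_b + ∫_{t_b}^{t_c} F₋(τ)dτ. -/
/-!
On the ice-free phase `E` integrates `F₋` directly. On the ice-covered phase the equation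
`(ζ - E) E' = ζ F₋` says exactly that `E - E² / (2ζ)` is an antiderivative of `F₋`. Adding the
two fundamental-theorem identities and using periodicity to move the integral over
`[t_b, t_b + 1]` to `[0, 1]` gives the implicit Poincaré map.
-/

open Set

theorem intervalIntegral.integral_eq_sub_of_hasDerivWithinAt_Icc {f f' : ℝ → ℝ} {a b : ℝ}
    (hab : a ≤ b) (hderiv : ∀ x ∈ Icc a b, HasDerivWithinAt f (f' x) (Icc a b) x)
    (hint : IntervalIntegrable f' MeasureTheory.volume a b) :
    ∫ x in a..b, f' x = f b - f a :=
  integral_eq_sub_of_hasDeriv_right_of_le hab (fun x hx => (hderiv x hx).continuousWithinAt)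
    (fun x hx => ((hderiv x (Ioo_subset_Icc_self hx)).hasDerivAt
      (Icc_mem_nhds hx.1 hx.2)).hasDerivWithinAt) hint

theorem HasDerivWithinAt.sub_sq_div_of_mul_eq {E : ℝ → ℝ} {s : Set ℝ} {x d f ζ : ℝ}
    (hζ : ζ ≠ 0) (hE : HasDerivWithinAt E d s x) (h : (ζ - E x) * d = ζ * f) :
    HasDerivWithinAt (fun t => E t - E t ^ 2 / (2 * ζ)) f s x := by
  refine (hE.fun_sub ((hE.fun_pow 2).div_const (2 * ζ))).congr_deriv ?_
  field_simp
  linear_combination 2 * h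

theorem ice_covered_poincare_general (ζ tb tc : ℝ) (hζ : 0 < ζ) (F : ℝ → ℝ)
    (hF : Continuous F) (hper : ∀ τ, F (τ + 1) = F τ)
    (h1 : tb < tc) (h2 : tc < tb + 1) (E : ℝ → ℝ)
    (hd1 : ∀ τ ∈ Set.Icc tb tc, HasDerivWithinAt E (F τ) (Set.Icc tb tc) τ)
    (hd2 : ∀ τ ∈ Set.Icc tc (tb + 1), ∃ d, HasDerivWithinAt E d (Set.Icc tc (tb + 1)) τ ∧
      (ζ - E τ) * d = ζ * F τ) :
    E (tb + 1) - (E (tb + 1)) ^ 2 / (2 * ζ) =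
      E tb - (E tb + ∫ τ in tb..tc, F τ) ^ 2 / (2 * ζ) + ∫ τ in (0:ℝ)..1, F τ := by
  have hfree : ∫ τ in tb..tc, F τ = E tc - E tb :=
    intervalIntegral.integral_eq_sub_of_hasDerivWithinAt_Icc h1.le hd1 (hF.intervalIntegrable _ _)
  have hcovered : ∫ τ in tc..tb + 1, F τ =
      (E (tb + 1) - E (tb + 1) ^ 2 / (2 * ζ)) - (E tc - E tc ^ 2 / (2 * ζ)) := by
    refine intervalIntegral.integral_eq_sub_of_hasDerivWithinAt_Icc
      (f := fun t => E t - E t ^ 2 / (2 * ζ)) h2.le (fun τ hτ => ?_)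
      (hF.intervalIntegrable _ _)
    obtain ⟨d, hd, hode⟩ := hd2 τ hτ
    exact hd.sub_sq_div_of_mul_eq hζ.ne' hode
  have hperiod : ∫ τ in (0:ℝ)..1, F τ = (∫ τ in tb..tc, F τ) + ∫ τ in tc..tb + 1, F τ := by
    rw [intervalIntegral.integral_add_adjacent_intervals (hF.intervalIntegrable _ _)
      (hF.intervalIntegrable _ _)]
    simpa using (Function.Periodic.intervalIntegral_add_eq hper 0 tb)
  rw [hperiod, hcovered, hfree]
  ring

/-- Implicit Poincaré map for the two-phase perennially ice-covered dynamics. -/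
theorem ice_covered_poincare (ζ tb tc : ℝ) (hζ : 0 < ζ) (F : ℝ → ℝ)
    (hF : Continuous F) (hper : ∀ τ, F (τ + 1) = F τ)
    (h1 : tb < tc) (h2 : tc < tb + 1) (E : ℝ → ℝ)
    (hEcont : ContinuousOn E (Set.Icc tb (tb + 1)))
    (hneg : ∀ τ ∈ Set.Icc tb (tb + 1), E τ < 0)
    (hd1 : ∀ τ ∈ Set.Icc tb tc, HasDerivWithinAt E (F τ) (Set.Icc tb tc) τ)
    (hd2 : ∀ τ ∈ Set.Icc tc (tb + 1), ∃ d, HasDerivWithinAt E d (Set.Icc tc (tb + 1)) τ ∧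
      (ζ - E τ) * d = ζ * F τ) :
    E (tb + 1) - (E (tb + 1)) ^ 2 / (2 * ζ) =
      E tb - (E tb + ∫ τ in tb..tc, F τ) ^ 2 / (2 * ζ) + ∫ τ in (0:ℝ)..1, F τ :=
  ice_covered_poincare_general ζ tb tc hζ F hF hper h1 h2 E hd1 hd2
end

section
/- The perennially ice-covered solution exists (i.e., E(τ) < 0 for all τ) if and only if its maximum value E_c* = ⟨F₋⟩ + I²/(2ζ) is negative, where I = ∫_{t_b}^{t_c} F₋ and ⟨F₋⟩ = ∫₀¹ F₋; in particular a necessary condition is ⟨F₋⟩ < −I²/(2ζ) < 0. -/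
/-- Existence condition for the perennially ice-covered periodic solution:
the solution satisfies `E < 0` throughout the period iff its maximum value
`E_c* = ⟨F₋⟩ + I²/(2ζ)` is negative; in particular `⟨F₋⟩ < -I²/(2ζ) < 0`. -/
theorem ice_covered_existence (ζ tb tc : ℝ) (hζ : 0 < ζ) (F : ℝ → ℝ)
    (hF : Continuous F) (hper : ∀ τ, F (τ + 1) = F τ)
    (h1 : tb < tc) (h2 : tc < tb + 1)
    (hFb : F tb = 0) (hFc : F tc = 0)
    (hFpos : ∀ τ ∈ Set.Ioo tb tc, 0 < F τ)
    (hFneg : ∀ τ ∈ Set.Ioo tc (tb + 1), F τ < 0)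
    (E : ℝ → ℝ)
    (hd1 : ∀ τ ∈ Set.Icc tb tc, HasDerivWithinAt E (F τ) (Set.Icc tb tc) τ)
    (hd2 : ∀ τ ∈ Set.Icc tc (tb + 1), ∃ d, HasDerivWithinAt E d (Set.Icc tc (tb + 1)) τ ∧
      (ζ - E τ) * d = ζ * F τ)
    (hinit : E tb = ζ * (∫ τ in (0:ℝ)..1, F τ) / (∫ τ in tb..tc, F τ) -
      (∫ τ in tb..tc, F τ) / 2)
    (hperE : E (tb + 1) = E tb) :
    ((∀ τ ∈ Set.Icc tb (tb + 1), E τ < 0) ↔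
      (∫ τ in (0:ℝ)..1, F τ) + (∫ τ in tb..tc, F τ) ^ 2 / (2 * ζ) < 0) ∧
    ((∀ τ ∈ Set.Icc tb (tb + 1), E τ < 0) →
      (∫ τ in (0:ℝ)..1, F τ) < -(∫ τ in tb..tc, F τ) ^ 2 / (2 * ζ) ∧
        -(∫ τ in tb..tc, F τ) ^ 2 / (2 * ζ) < 0) := by
  set A : ℝ := ∫ τ in (0:ℝ)..1, F τ with hA
  set I : ℝ := ∫ τ in tb..tc, F τ with hIdef
  have hI : 0 < I :=
    intervalIntegral.intervalIntegral_pos_of_pos_on (hF.intervalIntegrable tb tc) hFpos h1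
  -- continuity of E on the two subintervals
  have hcont1 : ContinuousOn E (Set.Icc tb tc) := fun x hx => (hd1 x hx).continuousWithinAt
  have hcont2 : ContinuousOn E (Set.Icc tc (tb + 1)) := fun x hx =>
    ((hd2 x hx).choose_spec.1).continuousWithinAt
  -- FTC on the first interval
  have hEtc : E tc = E tb + I := by
    have : ∫ τ in tb..tc, F τ = E tc - E tb := by
      apply intervalIntegral.integral_eq_sub_of_hasDeriv_right_of_le h1.le hcont1
        ?_ (hF.intervalIntegrable tb tc)
      intro x hx
      exact ((hd1 x (Set.Ioo_subset_Icc_self hx)).hasDerivAt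
        (Icc_mem_nhds hx.1 hx.2)).hasDerivWithinAt
    rw [← hIdef] at this; linarith
  -- key algebraic identity
  have hIne : I ≠ 0 := hI.ne'
  have hζne : ζ ≠ 0 := hζ.ne'
  have hkey : A + I ^ 2 / (2 * ζ) = (I / ζ) * E tc := by
    rw [hEtc, hinit]
    field_simp
    ring
  have hIζ : 0 < I / ζ := div_pos hI hζ
  -- E tc < 0 ↔ the maximum value is negative
  have hiff2 : E tc < 0 ↔ A + I ^ 2 / (2 * ζ) < 0 := by
    rw [hkey]
    constructor
    · intro h; exact mul_neg_of_pos_of_neg hIζ h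
    · intro h; nlinarith
  have hmain : (∀ τ ∈ Set.Icc tb (tb + 1), E τ < 0) ↔ A + I ^ 2 / (2 * ζ) < 0 := by
    constructor
    · intro h
      exact hiff2.1 (h tc ⟨h1.le, h2.le⟩)
    · intro h
      have hEc : E tc < 0 := hiff2.2 h
      -- E is monotone on [tb, tc]
      have hFnn : ∀ x ∈ Set.Icc tb tc, 0 ≤ F x := by
        intro x hx
        rcases eq_or_lt_of_le hx.1 with h | h
        · rw [← h, hFb]
        rcases eq_or_lt_of_le hx.2 with h' | h'
        · rw [h', hFc]
        exact (hFpos x ⟨h, h'⟩).le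
      have hmono : MonotoneOn E (Set.Icc tb tc) := by
        apply monotoneOn_of_deriv_nonneg (convex_Icc tb tc) hcont1
        · intro x hx
          rw [interior_Icc] at hx
          exact ((hd1 x (Set.Ioo_subset_Icc_self hx)).hasDerivAt
            (Icc_mem_nhds hx.1 hx.2)).differentiableAt.differentiableWithinAt
        · intro x hx
          rw [interior_Icc] at hx
          rw [((hd1 x (Set.Ioo_subset_Icc_self hx)).hasDerivAt
            (Icc_mem_nhds hx.1 hx.2)).deriv]
          exact hFnn x (Set.Ioo_subset_Icc_self hx)
      -- E < ζ on [tc, tb+1]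
      have hEb : E tb < 0 := by rw [hEtc] at hEc; linarith
      have hne : ∀ x ∈ Set.Ioo tc (tb + 1), E x ≠ ζ := by
        intro x hx hx'
        obtain ⟨d, _, heq⟩ := hd2 x (Set.Ioo_subset_Icc_self hx)
        rw [hx'] at heq
        have := hFneg x hx
        nlinarith
      have hltζ : ∀ x ∈ Set.Icc tc (tb + 1), E x < ζ := by
        intro x hx
        by_contra hcon
        push_neg at hcon
        have hxne : E x ≠ ζ := by
          intro h'
          rcases eq_or_lt_of_le hx.1 with h | h
          · rw [← h] at h'; linarith
          rcases eq_or_lt_of_le hx.2 with h'' | h''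
          · rw [h''] at h'; rw [hperE] at h'; linarith
          exact hne x ⟨h, h''⟩ h'
        have hgt : ζ < E x := lt_of_le_of_ne hcon (Ne.symm hxne)
        have hmem : ζ ∈ Set.Ioo (E tc) (E x) := ⟨by linarith, hgt⟩
        have := intermediate_value_Ioo hx.1 (hcont2.mono (Set.Icc_subset_Icc le_rfl hx.2)) hmem
        obtain ⟨s, hs, hsE⟩ := this
        exact hne s ⟨hs.1, lt_of_lt_of_le hs.2 hx.2⟩ hsE
      -- E is antitone on [tc, tb+1]
      have hanti : AntitoneOn E (Set.Icc tc (tb + 1)) := by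
        apply antitoneOn_of_deriv_nonpos (convex_Icc tc (tb + 1)) hcont2
        · intro x hx
          rw [interior_Icc] at hx
          obtain ⟨d, hdw, _⟩ := hd2 x (Set.Ioo_subset_Icc_self hx)
          exact (hdw.hasDerivAt (Icc_mem_nhds hx.1 hx.2)).differentiableAt.differentiableWithinAt
        · intro x hx
          rw [interior_Icc] at hx
          obtain ⟨d, hdw, heq⟩ := hd2 x (Set.Ioo_subset_Icc_self hx)
          rw [(hdw.hasDerivAt (Icc_mem_nhds hx.1 hx.2)).deriv]
          have h3 := hFneg x hx
          have h4 := hltζ x (Set.Ioo_subset_Icc_self hx)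
          nlinarith
      intro τ hτ
      rcases le_total τ tc with h | h
      · have := hmono ⟨hτ.1, h⟩ ⟨h1.le, le_rfl⟩ h
        linarith
      · have := hanti ⟨le_rfl, h2.le⟩ ⟨h, hτ.2⟩ h
        linarith
  refine ⟨hmain, fun h => ?_⟩
  have h5 := hmain.1 h
  have h6 : -I ^ 2 / (2 * ζ) = -(I ^ 2 / (2 * ζ)) := by ring
  have h7 : 0 < I ^ 2 / (2 * ζ) := div_pos (pow_pos hI 2) (by linarith)
  constructor
  · rw [h6]; linarith
  · rw [h6]; linarith
end

section
/- For the seasonally ice-free periodic solution, the Floquet multiplier is μ = e^{−B(t_f − t_m)} · (ζ/(ζ − E_b*)) · (F₋(t_f)/F₊(t_f)) · (F₊(t_m)/F₋(t_m)), obtained by implicit differentiation of the three-phase matching conditions E_b = −∫_{t_b}^{t_m}F₋, 0 = ∫_{t_m}^{t_f}e^{Bt}F₊(t)dt, E(t_b+1) − E(t_b+1)²/(2ζ) = ∫_{t_f}^{t_b+1}F₋, with respect to E_b at the fixed point E_b = E(t_b+1) = E_b*. -/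
/-!
Each matching condition holds identically in `E_b`, so differentiating it at the fixed point
(fundamental theorem of calculus with variable limits) gives a linear equation for
`t_m'`, `t_f'` and `E'(t_b + 1)`:
`1 = -F₋(t_m) t_m'`, `e^{B t_f} F₊(t_f) t_f' = e^{B t_m} F₊(t_m) t_m'` and
`(1 - E_b*/ζ) E'(t_b + 1) = -F₋(t_f) t_f'`. Solving this triangular system gives the multiplier.
-/

open Real

theorem hasDerivAt_intervalIntegral_of_hasDerivAt {f u v : ℝ → ℝ} {u' v' x : ℝ}
    (hf : Continuous f) (hu : HasDerivAt u u' x) (hv : HasDerivAt v v' x) :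
    HasDerivAt (fun y => ∫ τ in u y..v y, f τ) (f (v x) * v' - f (u x) * u') x := by
  have hprim (w : ℝ) : HasDerivAt (fun s => ∫ τ in (0 : ℝ)..s, f τ) (f w) w :=
    (hf.integral_hasStrictDerivAt 0 w).hasDerivAt
  have hsplit : (fun y => ∫ τ in u y..v y, f τ) =
      fun y => (∫ τ in (0 : ℝ)..v y, f τ) - ∫ τ in (0 : ℝ)..u y, f τ := by
    ext y
    exact (intervalIntegral.integral_interval_sub_left (hf.intervalIntegrable _ _)
      (hf.intervalIntegrable _ _)).symm
  rw [hsplit]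
  exact ((hprim (v x)).comp x hv).sub ((hprim (u x)).comp x hu)

theorem floquet_multiplier_of_linearized {B ζ x₀ tm tf Fm_tm Fm_tf Fp_tm Fp_tf dtm dtf dP : ℝ}
    (hFm_tm : Fm_tm ≠ 0) (hFp_tf : Fp_tf ≠ 0) (hζ : ζ ≠ 0) (hx₀ζ : x₀ ≠ ζ)
    (h1 : 1 = -(Fm_tm * dtm))
    (h2 : exp (B * tf) * Fp_tf * dtf = exp (B * tm) * Fp_tm * dtm)
    (h3 : (1 - x₀ / ζ) * dP = -(Fm_tf * dtf)) :
    dP = exp (-B * (tf - tm)) * (ζ / (ζ - x₀)) * (Fm_tf / Fp_tf) * (Fp_tm / Fm_tm) := by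
  have hζx : ζ - x₀ ≠ 0 := sub_ne_zero.2 hx₀ζ.symm
  have hdtm : dtm = -1 / Fm_tm := by field_simp; linarith
  have hdtf : dtf = exp (-B * (tf - tm)) * Fp_tm * dtm / Fp_tf := by
    rw [show -B * (tf - tm) = B * tm - B * tf by ring, exp_sub]
    field_simp
    linarith
  have hdP : dP = -(Fm_tf * dtf) * ζ / (ζ - x₀) := by
    field_simp at h3 ⊢
    linarith
  rw [hdP, hdtf, hdtm]
  field_simp

theorem seasonal_floquet_general (B ζ tb x₀ dtm dtf dP : ℝ) (hζ : 0 < ζ)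
    (Fp Fm Fp' Fm' : ℝ → ℝ)
    (hFp : ∀ τ, HasDerivAt Fp (Fp' τ) τ) (hFm : ∀ τ, HasDerivAt Fm (Fm' τ) τ)
    (tm tf P : ℝ → ℝ)
    (htm : HasDerivAt tm dtm x₀) (htf : HasDerivAt tf dtf x₀)
    (hP : HasDerivAt P dP x₀)
    (hmatch1 : ∀ x, x = -∫ τ in tb..(tm x), Fm τ)
    (hmatch2 : ∀ x, (∫ τ in (tm x)..(tf x), Real.exp (B * τ) * Fp τ) = 0)
    (hmatch3 : ∀ x, P x - (P x) ^ 2 / (2 * ζ) = ∫ τ in (tf x)..(tb + 1), Fm τ)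
    (hFmtm : Fm (tm x₀) ≠ 0) (hFptf : Fp (tf x₀) ≠ 0)
    (hfix : P x₀ = x₀) (hx₀ζ : x₀ ≠ ζ) :
    dP = Real.exp (-B * (tf x₀ - tm x₀)) * (ζ / (ζ - x₀)) *
      (Fm (tf x₀) / Fp (tf x₀)) * (Fp (tm x₀) / Fm (tm x₀)) := by
  have hFmc : Continuous Fm := continuous_iff_continuousAt.2 fun τ => (hFm τ).continuousAt
  have hFpc : Continuous Fp := continuous_iff_continuousAt.2 fun τ => (hFp τ).continuousAt
  have hconst (c : ℝ) : HasDerivAt (fun _ : ℝ => c) 0 x₀ := hasDerivAt_const x₀ c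
  have e1 : 1 = -(Fm (tm x₀) * dtm) := by
    have h := (hasDerivAt_intervalIntegral_of_hasDerivAt hFmc (hconst tb) htm).fun_neg
    rw [← funext hmatch1] at h
    simpa using (hasDerivAt_id' x₀).unique h
  have e2 : exp (B * tf x₀) * Fp (tf x₀) * dtf = exp (B * tm x₀) * Fp (tm x₀) * dtm := by
    have h := hasDerivAt_intervalIntegral_of_hasDerivAt
      (f := fun τ => exp (B * τ) * Fp τ) (by fun_prop) htm htf
    rw [funext hmatch2] at h
    exact sub_eq_zero.1 ((hconst 0).unique h).symm
  have e3 : (1 - x₀ / ζ) * dP = -(Fm (tf x₀) * dtf) := by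
    have h := hasDerivAt_intervalIntegral_of_hasDerivAt hFmc htf (hconst (tb + 1))
    rw [← funext hmatch3] at h
    have hl := hP.fun_sub ((hP.fun_pow 2).div_const (2 * ζ))
    have hderiv := hl.unique h
    norm_num [hfix] at hderiv
    field_simp at hderiv ⊢
    linarith
  exact floquet_multiplier_of_linearized hFmtm hFptf hζ.ne' hx₀ζ e1 e2 e3

/-- Floquet multiplier of the seasonally ice-free periodic solution, obtained by
implicit differentiation of the three-phase matching conditions. -/
theorem seasonal_floquet (B ζ tb x₀ dtm dtf dP : ℝ) (hB : 0 < B) (hζ : 0 < ζ)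
    (Fp Fm Fp' Fm' : ℝ → ℝ)
    (hFp : ∀ τ, HasDerivAt Fp (Fp' τ) τ) (hFm : ∀ τ, HasDerivAt Fm (Fm' τ) τ)
    (hFp' : Continuous Fp') (hFm' : Continuous Fm')
    (hFpper : ∀ τ, Fp (τ + 1) = Fp τ) (hFmper : ∀ τ, Fm (τ + 1) = Fm τ)
    (tm tf P : ℝ → ℝ)
    (htm : HasDerivAt tm dtm x₀) (htf : HasDerivAt tf dtf x₀)
    (hP : HasDerivAt P dP x₀)
    (hmatch1 : ∀ x, x = -∫ τ in tb..(tm x), Fm τ)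
    (hmatch2 : ∀ x, (∫ τ in (tm x)..(tf x), Real.exp (B * τ) * Fp τ) = 0)
    (hmatch3 : ∀ x, P x - (P x) ^ 2 / (2 * ζ) = ∫ τ in (tf x)..(tb + 1), Fm τ)
    (horder : tb < tm x₀ ∧ tm x₀ < tf x₀ ∧ tf x₀ < tb + 1)
    (hFmtm : Fm (tm x₀) ≠ 0) (hFptf : Fp (tf x₀) ≠ 0)
    (hfix : P x₀ = x₀) (hneg : x₀ < 0) (hx₀ζ : x₀ ≠ ζ) :
    dP = Real.exp (-B * (tf x₀ - tm x₀)) * (ζ / (ζ - x₀)) *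
      (Fm (tf x₀) / Fp (tf x₀)) * (Fp (tm x₀) / Fm (tm x₀)) :=
  seasonal_floquet_general B ζ tb x₀ dtm dtf dP hζ Fp Fm Fp' Fm' hFp hFm tm tf P htm htf hP hmatch1
    hmatch2 hmatch3 hFmtm hFptf hfix hx₀ζ
end
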